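/- Let q > 0, L₀ > 0, Tₘ₀ > 0, let γ > 0 satisfy q − L₀·γ = √π·(Tₘ₀/2 + L₀·γ²)·e^{γ²}·erf(γ), and set A = (q − L₀γ)/(√π·erf γ), T(y,t) = A·(2√t·e^{−y²/(4t)} + √π·y·erf(y/(2√t))) − q·y and S(t) = 2γ√t. Then the Stefan condition −∂T/∂y (S(t),t) = L₀√t · S'(t) holds for every t > 0; equivalently, ∂T/∂y (2γ√t, t) = −L₀·γ for every t > 0. -/

import Mathlib

/-!
Since `erf' = (2/√π) e^{-x²}`, the `y`-derivative of `√π y erf(y/(2√t))` produces a term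
`(y/√t) e^{-y²/(4t)}` that exactly cancels the derivative of `2√t e^{-y²/(4t)}`. Hence
`∂T/∂y (y,t) = A √π erf(y/(2√t)) − q`, and at `y = 2γ√t` the definition of `A` turns this into
`(q − L₀γ) − q = −L₀γ`. Together with `S'(t) = γ/√t` this is the Stefan condition.
-/

noncomputable def erf (x : ℝ) : ℝ :=
  (2 / Real.sqrt Real.pi) * ∫ s in (0:ℝ)..x, Real.exp (-s ^ 2)

open Real

lemma hasDerivAt_erf (x : ℝ) : HasDerivAt erf (2 / √π * exp (-x ^ 2)) x := by
  have hc : Continuous fun s : ℝ => exp (-s ^ 2) := by fun_prop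
  unfold erf
  exact (intervalIntegral.integral_hasDerivAt_right (hc.intervalIntegrable _ _)
    (hc.stronglyMeasurableAtFilter _ _) hc.continuousAt).const_mul (2 / √π)

lemma erf_pos {x : ℝ} (hx : 0 < x) : 0 < erf x := by
  have hc : Continuous fun s : ℝ => exp (-s ^ 2) := by fun_prop
  exact mul_pos (div_pos two_pos (sqrt_pos.2 pi_pos))
    (intervalIntegral.intervalIntegral_pos_of_pos_on (hc.intervalIntegrable _ _)
      (fun s _ => exp_pos _) hx)

lemma hasDerivAt_similarity_profile {s : ℝ} (hs : s ≠ 0) (y : ℝ) :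
    HasDerivAt (fun y => 2 * s * exp (-(y / (2 * s)) ^ 2) + √π * y * erf (y / (2 * s)))
      (√π * erf (y / (2 * s))) y := by
  have hu : HasDerivAt (fun y => y / (2 * s)) (1 / (2 * s)) y := by
    simpa using (hasDerivAt_id y).div_const (2 * s)
  have hexp := ((hu.fun_pow 2).fun_neg.exp).const_mul (2 * s)
  have herf := ((hasDerivAt_id' y).const_mul √π).fun_mul ((hasDerivAt_erf _).comp y hu)
  refine (hexp.fun_add herf).congr_deriv ?_
  have hπ : √π ≠ 0 := (sqrt_pos.2 pi_pos).ne'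
  norm_num
  field_simp
  ring

lemma neg_sq_div_four_mul_eq_neg_div_sq {t : ℝ} (ht : 0 ≤ t) (y : ℝ) :
    -y ^ 2 / (4 * t) = -(y / (2 * √t)) ^ 2 := by
  rw [div_pow, mul_pow, sq_sqrt ht]
  ring

theorem stmt8_general (q L₀ γ A : ℝ)
    (hγ : 0 < γ)
    (hA : A = (q - L₀ * γ) / (Real.sqrt Real.pi * erf γ))
    (T : ℝ → ℝ → ℝ)
    (hT : ∀ y t : ℝ, T y t =
      A * (2 * Real.sqrt t * Real.exp (-y ^ 2 / (4 * t))
            + Real.sqrt Real.pi * y * erf (y / (2 * Real.sqrt t))) - q * y)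
    (S : ℝ → ℝ) (hS : ∀ t : ℝ, S t = 2 * γ * Real.sqrt t) :
    ∀ t : ℝ, 0 < t →
      (-deriv (fun y : ℝ => T y t) (S t) = L₀ * Real.sqrt t * deriv S t ∧
        deriv (fun y : ℝ => T y t) (2 * γ * Real.sqrt t) = -(L₀ * γ)) := by
  intro t ht
  have hst : √t ≠ 0 := (sqrt_pos.2 ht).ne'
  have hTy : ∀ y, HasDerivAt (fun y => T y t) (A * (√π * erf (y / (2 * √t))) - q * 1) y := by
    intro y
    refine (((hasDerivAt_similarity_profile hst y).const_mul A).fun_sub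
      ((hasDerivAt_id' y).const_mul q)).congr_of_eventuallyEq (.of_forall fun z => ?_)
    show T z t = _
    rw [hT, neg_sq_div_four_mul_eq_neg_div_sq ht.le]
  have hγ_arg : 2 * γ * √t / (2 * √t) = γ := by field_simp
  have hπerf : √π * erf γ ≠ 0 := (mul_pos (sqrt_pos.2 pi_pos) (erf_pos hγ)).ne'
  have hTS : deriv (fun y => T y t) (2 * γ * √t) = -(L₀ * γ) := by
    rw [(hTy _).deriv, hγ_arg, hA, div_mul_eq_mul_div, mul_div_cancel_right₀ _ hπerf]
    ring
  have hS' : HasDerivAt S (2 * γ * (1 / (2 * √t))) t := by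
    rw [funext hS]
    exact (hasDerivAt_sqrt ht.ne').const_mul (2 * γ)
  refine ⟨?_, hTS⟩
  rw [hS, hTS, hS'.deriv]
  field_simp

/-- With `A = (q − L₀γ)/(√π erf γ)`,
`T(y,t) = A(2√t e^{−y²/(4t)} + √π y erf(y/(2√t))) − q y` and `S(t) = 2γ√t`,
the Stefan condition `−∂T/∂y (S(t),t) = L₀√t · S'(t)` holds for every `t > 0`;
equivalently `∂T/∂y (2γ√t, t) = −L₀γ` for every `t > 0`. -/
theorem stmt8 (q L₀ Tm₀ γ A : ℝ) (hq : 0 < q) (hL : 0 < L₀) (hTm : 0 < Tm₀)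
    (hγ : 0 < γ)
    (hγeq : q - L₀ * γ =
      Real.sqrt Real.pi * (Tm₀ / 2 + L₀ * γ ^ 2) * Real.exp (γ ^ 2) * erf γ)
    (hA : A = (q - L₀ * γ) / (Real.sqrt Real.pi * erf γ))
    (T : ℝ → ℝ → ℝ)
    (hT : ∀ y t : ℝ, T y t =
      A * (2 * Real.sqrt t * Real.exp (-y ^ 2 / (4 * t))
            + Real.sqrt Real.pi * y * erf (y / (2 * Real.sqrt t))) - q * y)
    (S : ℝ → ℝ) (hS : ∀ t : ℝ, S t = 2 * γ * Real.sqrt t) :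
    ∀ t : ℝ, 0 < t →
      (-deriv (fun y : ℝ => T y t) (S t) = L₀ * Real.sqrt t * deriv S t ∧
        deriv (fun y : ℝ => T y t) (2 * γ * Real.sqrt t) = -(L₀ * γ)) :=
  stmt8_general q L₀ γ A hγ hA T hT S hS
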